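/- Let ε > 0, 0 < μ ≤ 12 and let u : ℝ → ℝ be continuously differentiable and 1-periodic with ∫₀¹ (u² + (μ/12)·(u')²) dx = C₀. Then sup_{x∈[0,1]} |(P∗g(u))(x)| ≤ 2·n₂·C₀^{1/2} + (5/2)·ε·n_∞·C₀ + (1/8)·ε²·n_∞·√(13/μ)·C₀^{3/2} + (3/64)·ε³·n_∞·(13/μ)·C₀² + (7/4)·ε·n_∞·C₀, where n₂ = ‖P‖_{L²[0,1]} and n_∞ = ‖P‖_{L^∞[0,1]}. -/

import Mathlib

/-!
The linear part `2u` of `g(u)` is estimated by Cauchy–Schwarz against `P`, the remainder by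
`‖P‖_∞` times its `L¹` norm, which is a multiple of the energy `C₀` once `u` is bounded pointwise.

That bound, `u² ≤ (13/μ) C₀`, is a periodic Sobolev inequality. With `s = √(3/μ)`, integrate
the derivative of `u(y)² tanh(s(2(y - x₀) - 1)) / (2s)` over `[x₀, x₀ + 1]`: since
`(tanh θ)' = 1 - tanh² θ`, the integrand falls short of `u² + (μ/12) u'²` by a perfect square, so
`u(x₀)² tanh s ≤ s C₀`. Finally `μ ≤ 12` gives `s ≥ 1/2`, hence `3 ≤ 13 s tanh s`.
-/

/-- The 1-periodic Green's function of the operator `1 - (μ/12)∂ₓ²`. -/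
noncomputable def P (μ x : ℝ) : ℝ :=
  Real.sqrt (3/μ) *
    (Real.exp (2 * Real.sqrt (3/μ) * (x - ⌊x⌋)) +
     Real.exp (2 * Real.sqrt (3/μ) * (1 - (x - ⌊x⌋)))) /
  (Real.exp (2 * Real.sqrt (3/μ)) - 1)

noncomputable def pconv (μ : ℝ) (h : ℝ → ℝ) (x : ℝ) : ℝ :=
  ∫ y in (0:ℝ)..1, P μ (x - y) * h y

/-- The paper's `g(w)`, with the derivative `w'` supplied explicitly. -/
noncomputable def gfun (ε μ : ℝ) (w w' : ℝ → ℝ) (x : ℝ) : ℝ :=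
  2 * w x + (5/2) * ε * (w x)^2 - (1/8) * ε^2 * (w x)^3 + (3/64) * ε^3 * (w x)^4
    - (7/48) * ε * μ * (w' x)^2

/-- `n₂ = ‖P‖_{L²[0,1]}`. -/
noncomputable def n2 (μ : ℝ) : ℝ := Real.sqrt (∫ x in (0:ℝ)..1, (P μ x)^2)

/-- `n_∞ = ‖P‖_{L^∞[0,1]}`. -/
noncomputable def ninf (μ : ℝ) : ℝ := sSup ((fun x => |P μ x|) '' Set.Icc (0:ℝ) 1)

open MeasureTheory Real Set

namespace Real

theorem hasDerivAt_tanh (x : ℝ) : HasDerivAt tanh (1 - tanh x ^ 2) x := by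
  have h := (hasDerivAt_sinh x).div (hasDerivAt_cosh x) (cosh_pos x).ne'
  rw [show tanh = sinh / cosh from funext tanh_eq_sinh_div_cosh]
  refine h.congr_deriv ?_
  rw [Pi.div_apply]
  field_simp

@[fun_prop]
theorem continuous_tanh : Continuous tanh :=
  continuous_iff_continuousAt.2 fun x => (hasDerivAt_tanh x).continuousAt

theorem tanh_strictMono : StrictMono tanh :=
  strictMono_of_deriv_pos fun x => by
    rw [(hasDerivAt_tanh x).deriv]
    nlinarith [tanh_lt_one x, neg_one_lt_tanh x]

theorem six_le_thirteen_mul_tanh_half : 6 ≤ 13 * tanh (1 / 2) := by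
  have h : tanh (1 / 2) = (exp 1 - 1) / (exp 1 + 1) := by
    rw [tanh_eq, div_eq_div_iff (by positivity) (by positivity), exp_neg]
    have h2 : exp 1 = exp (1 / 2) * exp (1 / 2) := by rw [← exp_add]; norm_num
    field_simp
    rw [h2]
    ring
  rw [h, mul_div_assoc', le_div_iff₀ (by positivity)]
  linarith [exp_one_gt_d9]

end Real

theorem Function.Periodic.deriv {f : ℝ → ℝ} {c : ℝ} (hf : Function.Periodic f c) :
    Function.Periodic (deriv f) c := fun x => by
  rw [← deriv_comp_add_const, hf.funext]

theorem Function.Periodic.intervalIntegral_comp_sub_left {f : ℝ → ℝ} {T : ℝ}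
    (hf : Function.Periodic f T) (x : ℝ) :
    ∫ y in (0:ℝ)..T, f (x - y) = ∫ y in (0:ℝ)..T, f y := by
  have h := hf.intervalIntegral_add_eq (x - T) 0
  rw [sub_add_cancel, zero_add] at h
  rw [intervalIntegral.integral_comp_sub_left, sub_zero, h]

theorem abs_intervalIntegral_mul_le_sqrt_mul_sqrt {a b : ℝ} (hab : a ≤ b) {f g : ℝ → ℝ}
    (hf : MemLp f 2 (volume.restrict (Ioc a b))) (hg : MemLp g 2 (volume.restrict (Ioc a b))) :
    |∫ x in a..b, f x * g x| ≤ √(∫ x in a..b, f x ^ 2) * √(∫ x in a..b, g x ^ 2) := by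
  simp only [intervalIntegral.integral_of_le hab, sqrt_eq_rpow]
  have holder := integral_mul_le_Lp_mul_Lq_of_nonneg (f := |f|) (g := |g|)
    HolderConjugate.two_two (.of_forall fun x => abs_nonneg (f x))
    (.of_forall fun x => abs_nonneg (g x)) (by simpa using hf.abs) (by simpa using hg.abs)
  calc |∫ x in Ioc a b, f x * g x| ≤ ∫ x in Ioc a b, |f x * g x| :=
        MeasureTheory.abs_integral_le_integral_abs
    _ = ∫ x in Ioc a b, |f| x * |g| x := by simp only [abs_mul, Pi.abs_apply]
    _ ≤ _ := holder.trans_eq (by simp only [Pi.abs_apply, rpow_two, sq_abs])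

theorem P_fract (μ x : ℝ) : P μ (Int.fract x) = P μ x := by
  simp only [P, Int.self_sub_floor, Int.fract_fract]

theorem P_periodic (μ : ℝ) : Function.Periodic (P μ) 1 := fun x => by
  rw [← P_fract, Int.fract_add_one, P_fract]

theorem measurable_P (μ : ℝ) : Measurable (P μ) := by
  unfold P
  fun_prop

theorem P_pos {μ : ℝ} (hμ : 0 < μ) (x : ℝ) : 0 < P μ x := by
  have : 1 < exp (2 * √(3 / μ)) := one_lt_exp_iff.2 (by positivity)
  have : 0 < exp (2 * √(3 / μ)) - 1 := by linarith
  unfold P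
  positivity

theorem P_le {μ : ℝ} (hμ : 0 < μ) (x : ℝ) :
    P μ x ≤ √(3 / μ) * (exp (2 * √(3 / μ)) + exp (2 * √(3 / μ))) / (exp (2 * √(3 / μ)) - 1) := by
  have hs : 0 ≤ √(3 / μ) := sqrt_nonneg _
  have : 1 < exp (2 * √(3 / μ)) := one_lt_exp_iff.2 (by positivity)
  have h0 := Int.fract_nonneg x
  have h1 := Int.fract_lt_one x
  simp only [P, Int.self_sub_floor]
  gcongr ?_ * (exp ?_ + exp ?_) / _ <;> nlinarith

theorem abs_P_le_ninf {μ : ℝ} (hμ : 0 < μ) (x : ℝ) : |P μ x| ≤ ninf μ := by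
  rw [← P_fract]
  exact le_csSup ⟨_, forall_mem_image.2 fun t _ => (abs_of_pos (P_pos hμ t)).trans_le (P_le hμ t)⟩
    (mem_image_of_mem _ ⟨Int.fract_nonneg x, (Int.fract_lt_one x).le⟩)

theorem ninf_nonneg {μ : ℝ} (hμ : 0 < μ) : 0 ≤ ninf μ :=
  (abs_nonneg _).trans (abs_P_le_ninf hμ 0)

theorem intervalIntegrable_P_comp_sub {μ : ℝ} (hμ : 0 < μ) (x a b : ℝ) :
    IntervalIntegrable (fun y => P μ (x - y)) volume a b :=
  intervalIntegrable_const.mono_fun'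
    ((measurable_P μ).comp (measurable_const.sub measurable_id)).aestronglyMeasurable
    (.of_forall fun y => abs_P_le_ninf hμ (x - y))

theorem memLp_P_comp_sub {μ : ℝ} (hμ : 0 < μ) (x a b : ℝ) :
    MemLp (fun y => P μ (x - y)) 2 (volume.restrict (Ioc a b)) :=
  .of_bound ((measurable_P μ).comp (measurable_const.sub measurable_id)).aestronglyMeasurable
    (ninf μ) (.of_forall fun y => abs_P_le_ninf hμ (x - y))

theorem n2_nonneg (μ : ℝ) : 0 ≤ n2 μ := sqrt_nonneg _

theorem integral_P_comp_sub_sq (μ x : ℝ) :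
    ∫ y in (0:ℝ)..1, P μ (x - y) ^ 2 = n2 μ ^ 2 := by
  rw [n2, sq_sqrt (intervalIntegral.integral_nonneg zero_le_one fun y _ => sq_nonneg _)]
  exact ((P_periodic μ).comp fun p => p ^ 2).intervalIntegral_comp_sub_left x

theorem two_mul_mul_div_add_sq_mul_one_sub_sq_le (a b t : ℝ) {s : ℝ} (hs : s ≠ 0) :
    2 * a * b * (t / (2 * s)) + a ^ 2 * (1 - t ^ 2) ≤ a ^ 2 + (4 * s ^ 2)⁻¹ * b ^ 2 := by
  have hgap : a ^ 2 + (4 * s ^ 2)⁻¹ * b ^ 2 - (2 * a * b * (t / (2 * s)) + a ^ 2 * (1 - t ^ 2))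
      = (a * t - b / (2 * s)) ^ 2 := by
    field_simp
    ring
  exact sub_nonneg.1 (hgap ▸ sq_nonneg _)

theorem sq_mul_tanh_le_integral {u : ℝ → ℝ} (hu : ContDiff ℝ 1 u) (hp : Function.Periodic u 1)
    {s : ℝ} (hs : 0 < s) (x₀ : ℝ) :
    u x₀ ^ 2 * tanh s ≤ s * ∫ x in (0:ℝ)..1, (u x ^ 2 + (4 * s ^ 2)⁻¹ * deriv u x ^ 2) := by
  have hcu := hu.continuous
  have hcu' := hu.continuous_deriv le_rfl
  set θ : ℝ → ℝ := fun y => s * (2 * (y - x₀) - 1)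
  have hθ (y : ℝ) : HasDerivAt θ (2 * s) y :=
    ((((hasDerivAt_id' y).sub_const x₀).const_mul 2).sub_const 1).const_mul s |>.congr_deriv
      (by ring)
  have hF (y : ℝ) : HasDerivAt (fun y => u y ^ 2 * (tanh (θ y) / (2 * s)))
      (2 * u y * deriv u y * (tanh (θ y) / (2 * s)) + u y ^ 2 * (1 - tanh (θ y) ^ 2)) y := by
    have hu' := (hu.differentiable one_ne_zero y).hasDerivAt
    refine ((hu'.pow 2).mul (((hasDerivAt_tanh _).comp y (hθ y)).div_const _)).congr_deriv ?_
    simp only [Function.comp, Pi.pow_apply]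
    field_simp
    ring
  have hcont : Continuous fun y =>
      2 * u y * deriv u y * (tanh (θ y) / (2 * s)) + u y ^ 2 * (1 - tanh (θ y) ^ 2) := by
    fun_prop
  have hFTC := intervalIntegral.integral_eq_sub_of_hasDerivAt (a := x₀) (b := x₀ + 1)
    (fun y _ => hF y) (hcont.intervalIntegrable _ _)
  have hθ₁ : θ (x₀ + 1) = s := by simp only [θ]; ring
  have hθ₀ : θ x₀ = -s := by simp only [θ]; ring
  rw [hθ₁, hθ₀, hp, tanh_neg] at hFTC
  have henergy_cont : Continuous fun x => u x ^ 2 + (4 * s ^ 2)⁻¹ * deriv u x ^ 2 := by fun_prop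
  have henergy : Function.Periodic (fun x => u x ^ 2 + (4 * s ^ 2)⁻¹ * deriv u x ^ 2) 1 :=
    fun x => by simp only [hp x, hp.deriv x]
  have hmono := intervalIntegral.integral_mono_on (μ := volume) (a := x₀) (b := x₀ + 1)
    (by linarith) (hcont.intervalIntegrable _ _) (henergy_cont.intervalIntegrable _ _)
    fun y _ => two_mul_mul_div_add_sq_mul_one_sub_sq_le _ _ _ hs.ne'
  rw [hFTC, henergy.intervalIntegral_add_eq x₀ 0, zero_add] at hmono
  calc u x₀ ^ 2 * tanh s
        = s * (u x₀ ^ 2 * (tanh s / (2 * s)) - u x₀ ^ 2 * (-tanh s / (2 * s))) := by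
          field_simp
          ring
    _ ≤ _ := by gcongr

theorem three_le_thirteen_mul_mul_tanh {s : ℝ} (hs : 1 / 2 ≤ s) : 3 ≤ 13 * s * tanh s := by
  have hmono := tanh_strictMono.monotone hs
  have := six_le_thirteen_mul_tanh_half
  nlinarith

theorem sq_le_of_integral_energy_eq {μ C₀ : ℝ} (hμ : 0 < μ) (hμ' : μ ≤ 12) {u : ℝ → ℝ}
    (hu : ContDiff ℝ 1 u) (hp : Function.Periodic u 1)
    (hC : (∫ x in (0:ℝ)..1, ((u x)^2 + (μ/12) * (deriv u x)^2)) = C₀) (x₀ : ℝ) :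
    u x₀ ^ 2 ≤ 13 / μ * C₀ := by
  set s := √(3 / μ)
  have hs2 : s ^ 2 = 3 / μ := sq_sqrt (div_nonneg (by norm_num) hμ.le)
  have hs : 1 / 2 ≤ s := by
    rw [le_sqrt' (by norm_num), le_div_iff₀ hμ]
    linarith
  have h := sq_mul_tanh_le_integral hu hp (s := s) (by linarith) x₀
  rw [show (4 * s ^ 2)⁻¹ = μ / 12 by rw [hs2]; field_simp; ring, hC] at h
  have h3 := three_le_thirteen_mul_mul_tanh hs
  rw [show 13 / μ = 13 * s ^ 2 / 3 by rw [hs2]; field_simp]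
  nlinarith [sq_nonneg (u x₀)]

theorem abs_gfun_sub_two_mul_le {ε μ M : ℝ} (hε : 0 ≤ ε) (hμ : 0 ≤ μ) {w w' : ℝ → ℝ} {x : ℝ}
    (hM : |w x| ≤ M) :
    |gfun ε μ w w' x - 2 * w x|
      ≤ ((5/2) * ε + (1/8) * ε^2 * M + (3/64) * ε^3 * M^2 + (7/4) * ε)
        * (w x ^ 2 + μ / 12 * w' x ^ 2) := by
  unfold gfun
  set a := w x
  have ha3 : |a ^ 3| ≤ M * a ^ 2 := by
    rw [abs_pow, pow_succ', ← sq_abs a]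
    exact mul_le_mul_of_nonneg_right hM (sq_nonneg _)
  have ha4 : a ^ 4 ≤ M ^ 2 * a ^ 2 := by
    rw [show a ^ 4 = |a| ^ 2 * a ^ 2 by rw [sq_abs]; ring]
    exact mul_le_mul_of_nonneg_right (pow_le_pow_left₀ (abs_nonneg a) hM 2) (sq_nonneg _)
  have hε2 : 0 ≤ ε ^ 2 := by positivity
  have hε3 : 0 ≤ ε ^ 3 := by positivity
  have hb : 0 ≤ μ / 12 * w' x ^ 2 := by positivity
  have hK : 0 ≤ (5/2) * ε + (1/8) * ε^2 * M + (3/64) * ε^3 * M^2 := by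
    have := (abs_nonneg a).trans hM
    positivity
  calc _ ≤ (5/2) * ε * a ^ 2 + (1/8) * ε^2 * (M * a ^ 2) + (3/64) * ε^3 * (M ^ 2 * a ^ 2)
          + (7/4) * ε * (μ / 12 * w' x ^ 2) := by
        rw [abs_le]
        constructor <;>
          linarith [mul_le_mul_of_nonneg_left ha3 hε2, mul_le_mul_of_nonneg_left ha4 hε3,
            mul_le_mul_of_nonneg_left (neg_abs_le (a ^ 3)) hε2,
            mul_le_mul_of_nonneg_left (le_abs_self (a ^ 3)) hε2,
            mul_nonneg hε3 (by positivity : (0:ℝ) ≤ a ^ 4), mul_nonneg hε (sq_nonneg a),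
            mul_nonneg hε hb]
    _ ≤ _ := by linarith [mul_nonneg hK hb, mul_nonneg hε (sq_nonneg a)]

theorem abs_integral_P_mul_le_n2 {μ : ℝ} (hμ : 0 < μ) (x : ℝ) {f : ℝ → ℝ} (hf : Continuous f) :
    |∫ y in (0:ℝ)..1, P μ (x - y) * f y| ≤ n2 μ * √(∫ y in (0:ℝ)..1, f y ^ 2) := by
  have hf2 : MemLp f 2 (volume.restrict (Ioc 0 1)) :=
    (memLp_two_iff_integrable_sq hf.aestronglyMeasurable).2
      (((hf.pow 2).intervalIntegrable 0 1).1)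
  have h := abs_intervalIntegral_mul_le_sqrt_mul_sqrt zero_le_one (memLp_P_comp_sub hμ x 0 1) hf2
  rwa [integral_P_comp_sub_sq, sqrt_sq (n2_nonneg μ)] at h

theorem abs_integral_P_mul_le_ninf {μ : ℝ} (hμ : 0 < μ) (x : ℝ) {f b : ℝ → ℝ}
    (hb : IntervalIntegrable b volume 0 1) (hfb : ∀ y, |f y| ≤ b y) :
    |∫ y in (0:ℝ)..1, P μ (x - y) * f y| ≤ ninf μ * ∫ y in (0:ℝ)..1, b y := by
  refine (intervalIntegral.norm_integral_le_of_norm_le (f := fun y => P μ (x - y) * f y)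
    zero_le_one (.of_forall fun y _ => ?_) (hb.const_mul (ninf μ))).trans_eq
    (intervalIntegral.integral_const_mul _ _)
  rw [Real.norm_eq_abs, abs_mul]
  exact mul_le_mul (abs_P_le_ninf hμ _) (hfb y) (abs_nonneg _) (ninf_nonneg hμ)

theorem pconv_eq_mul_add {μ : ℝ} (hμ : 0 < μ) (x c : ℝ) {g w : ℝ → ℝ} (hg : Continuous g)
    (hw : Continuous w) :
    pconv μ g x = c * (∫ y in (0:ℝ)..1, P μ (x - y) * w y)
      + ∫ y in (0:ℝ)..1, P μ (x - y) * (g y - c * w y) := by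
  have hK := intervalIntegrable_P_comp_sub hμ x 0 1
  rw [← intervalIntegral.integral_const_mul, ← intervalIntegral.integral_add
    ((hK.mul_continuousOn hw.continuousOn).const_mul c) (hK.mul_continuousOn (by fun_prop))]
  simp only [pconv]
  congr 1 with y
  ring

/-- Uniform bound on the periodic convolution `P∗g(u)` in terms of the energy
`C₀ = ∫₀¹ (u² + (μ/12)(u')²)`. -/
theorem stmt11 (ε μ C₀ : ℝ) (hε : 0 < ε) (hμ : 0 < μ) (hμ' : μ ≤ 12)
    (u : ℝ → ℝ) (hu : ContDiff ℝ 1 u) (hp : Function.Periodic u 1)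
    (hC : (∫ x in (0:ℝ)..1, ((u x)^2 + (μ/12) * (deriv u x)^2)) = C₀) :
    ∀ x ∈ Set.Icc (0:ℝ) 1,
      |pconv μ (gfun ε μ u (deriv u)) x|
        ≤ 2 * n2 μ * Real.sqrt C₀ + (5/2) * ε * ninf μ * C₀
          + (1/8) * ε^2 * ninf μ * Real.sqrt (13/μ) * (C₀ * Real.sqrt C₀)
          + (3/64) * ε^3 * ninf μ * (13/μ) * C₀^2
          + (7/4) * ε * ninf μ * C₀ := by
  intro x _
  have hcu := hu.continuous
  have hcu' := hu.continuous_deriv le_rfl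
  have hE : Continuous fun y => u y ^ 2 + μ / 12 * deriv u y ^ 2 := by fun_prop
  have hC₀ : 0 ≤ C₀ := hC ▸ intervalIntegral.integral_nonneg zero_le_one fun y _ => by positivity
  have hu2 : ∫ y in (0:ℝ)..1, u y ^ 2 ≤ C₀ := hC ▸ intervalIntegral.integral_mono_on zero_le_one
    ((hcu.pow 2).intervalIntegrable _ _) (hE.intervalIntegrable _ _) fun y _ => by
      simp only [le_add_iff_nonneg_right]; positivity
  have hsup (y : ℝ) : |u y| ≤ √(13 / μ) * √C₀ := by
    rw [← sqrt_mul (by positivity)]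
    exact abs_le_sqrt (sq_le_of_integral_energy_eq hμ hμ' hu hp hC y)
  have hlin : |∫ y in (0:ℝ)..1, P μ (x - y) * u y| ≤ n2 μ * √C₀ :=
    (abs_integral_P_mul_le_n2 hμ x hcu).trans (by gcongr; exact n2_nonneg μ)
  have hrem := abs_integral_P_mul_le_ninf hμ x ((hE.const_mul _).intervalIntegrable 0 1)
    fun y => abs_gfun_sub_two_mul_le hε.le hμ.le (hsup y)
  rw [intervalIntegral.integral_const_mul, hC] at hrem
  rw [pconv_eq_mul_add hμ x 2 (by unfold gfun; fun_prop) hcu]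
  refine (abs_add_le _ _).trans ?_
  rw [abs_mul, abs_two]
  refine (add_le_add (mul_le_mul_of_nonneg_left hlin zero_le_two) hrem).trans_eq ?_
  rw [mul_pow, sq_sqrt (by positivity), sq_sqrt hC₀]
  ring
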